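/- For every real r with 0 < r ≤ 1 and every real φ with 0 < φ < π, the series ∑_{k=1}^∞ (-1)^{k+1} r^k cos(kφ)/(k+2) is strictly less than the series ∑_{k=1}^∞ (-1)^{k+1} r^k/(k+2). -/

import Mathlib

/-!
Since `1/(k+2) = ∫₀¹ t^(k+1) dt`, the `N`-th partial sum of `B - A` equals
`∫₀¹ t · ∑_{k=1}^N (-1)^(k+1) (1 - cos kφ) (rt)^k dt`. The inner sum is the difference of the real
part of a geometric sum in `-rt e^{iφ}` and a geometric sum in `-rt`; for `0 < φ < π` these are
bounded uniformly in `N` and `t`, and for `x = rt < 1` they converge to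
`x/(1+x) - (x cos φ + x²)/(1 + 2x cos φ + x²) = x(1 - cos φ)(1 - x)/((1+x)(1 + 2x cos φ + x²))`.
Dominated convergence identifies `B - A` with the integral of `t` times this positive function.
-/

open Real Filter

section GeomSum

variable {K : Type*} [NormedField K] {z : K}

lemma sum_Icc_one_pow (hz : z ≠ 1) (N : ℕ) :
    ∑ k ∈ Finset.Icc 1 N, z ^ k = (z - z ^ (N + 1)) / (1 - z) := by
  rw [← Finset.Ico_add_one_right_eq_Icc, geom_sum_Ico' hz (by omega), pow_one]

lemma norm_sum_Icc_one_pow_le (hz : ‖z‖ ≤ 1) (hz1 : z ≠ 1) (N : ℕ) :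
    ‖∑ k ∈ Finset.Icc 1 N, z ^ k‖ ≤ 2 / ‖1 - z‖ := by
  rw [sum_Icc_one_pow hz1, norm_div]
  gcongr
  calc ‖z - z ^ (N + 1)‖ ≤ ‖z‖ + ‖z‖ ^ (N + 1) := by
        simpa [norm_pow] using norm_sub_le z (z ^ (N + 1))
    _ ≤ 2 := by linarith [pow_le_one₀ (norm_nonneg z) hz (n := N + 1)]

lemma tendsto_sum_Icc_one_pow (hz : ‖z‖ < 1) :
    Tendsto (fun N : ℕ => ∑ k ∈ Finset.Icc 1 N, z ^ k) atTop (nhds (z / (1 - z))) := by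
  have hz1 : z ≠ 1 := by rintro rfl; simp at hz
  simp_rw [sum_Icc_one_pow hz1]
  have := (tendsto_pow_atTop_nhds_zero_of_norm_lt_one hz).comp (tendsto_add_atTop_nat 1)
  simpa using ((tendsto_const_nhds (x := z)).sub this).div_const (1 - z)

end GeomSum

section ExpMul

open Complex

lemma neg_ofReal_mul_exp_pow_re (x φ : ℝ) (k : ℕ) :
    ((-(x * exp (φ * I))) ^ k).re = (-x) ^ k * Real.cos (k * φ) := by
  have h : (-(x * exp (φ * I))) ^ k = ((-x) ^ k : ℝ) * exp ((k * φ : ℝ) * I) := by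
    push_cast
    rw [neg_pow, mul_pow, ← Complex.exp_nat_mul, neg_pow (x : ℂ)]
    ring_nf
  rw [h, re_ofReal_mul, exp_ofReal_mul_I_re]

lemma normSq_one_add_ofReal_mul_exp (x φ : ℝ) :
    normSq (1 + x * exp (φ * I)) = 1 + 2 * x * Real.cos φ + x ^ 2 := by
  rw [normSq_apply]
  simp only [add_re, add_im, one_re, one_im, re_ofReal_mul, im_ofReal_mul,
    exp_ofReal_mul_I_re, exp_ofReal_mul_I_im]
  nlinarith [Real.sin_sq_add_cos_sq φ]

lemma neg_div_one_add_ofReal_mul_exp_re (x φ : ℝ) :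
    (-(x * exp (φ * I)) / (1 + x * exp (φ * I))).re
      = -(x * Real.cos φ + x ^ 2) / (1 + 2 * x * Real.cos φ + x ^ 2) := by
  rw [div_re, normSq_one_add_ofReal_mul_exp, ← add_div]
  congr 1
  simp only [neg_re, neg_im, add_re, add_im, one_re, one_im, re_ofReal_mul, im_ofReal_mul,
    exp_ofReal_mul_I_re, exp_ofReal_mul_I_im]
  nlinarith [Real.sin_sq_add_cos_sq φ]

end ExpMul

lemma sin_sq_le_one_add_two_mul_cos_add_sq (x φ : ℝ) :
    sin φ ^ 2 ≤ 1 + 2 * x * cos φ + x ^ 2 := by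
  nlinarith [sin_sq_add_cos_sq φ, sq_nonneg (x + cos φ)]

noncomputable def cosDefectSum (x φ : ℝ) (N : ℕ) : ℝ :=
  ∑ k ∈ Finset.Icc 1 N, (-1) ^ (k + 1) * (1 - cos (k * φ)) * x ^ k

noncomputable def cosDefect (x φ : ℝ) : ℝ :=
  x / (1 + x) - (x * cos φ + x ^ 2) / (1 + 2 * x * cos φ + x ^ 2)

lemma cosDefectSum_eq (x φ : ℝ) (N : ℕ) :
    cosDefectSum x φ N
      = (∑ k ∈ Finset.Icc 1 N, (-(x * Complex.exp (φ * Complex.I))) ^ k).re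
        - ∑ k ∈ Finset.Icc 1 N, (-x) ^ k := by
  rw [cosDefectSum, Complex.re_sum, ← Finset.sum_sub_distrib]
  refine Finset.sum_congr rfl fun k _ => ?_
  rw [neg_ofReal_mul_exp_pow_re, neg_pow x, pow_succ]
  ring

lemma abs_cosDefectSum_le {x φ : ℝ} (hx0 : 0 ≤ x) (hx1 : x ≤ 1) (hφ : 0 < sin φ) (N : ℕ) :
    |cosDefectSum x φ N| ≤ 2 / sin φ + 2 := by
  set w := x * Complex.exp (φ * Complex.I)
  have hw : ‖-w‖ = x := by
    rw [norm_neg, norm_mul, Complex.norm_exp_ofReal_mul_I, mul_one, Complex.norm_real,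
      Real.norm_of_nonneg hx0]
  have hsin_le : sin φ ≤ ‖1 - -w‖ := by
    rw [sub_neg_eq_add, Complex.norm_def, normSq_one_add_ofReal_mul_exp]
    exact Real.le_sqrt_of_sq_le (sin_sq_le_one_add_two_mul_cos_add_sq x φ)
  have hw1 : -w ≠ 1 := by
    rintro h
    rw [h, sub_self, norm_zero] at hsin_le
    linarith
  have hcomplex : |(∑ k ∈ Finset.Icc 1 N, (-w) ^ k).re| ≤ 2 / sin φ :=
    calc _ ≤ ‖∑ k ∈ Finset.Icc 1 N, (-w) ^ k‖ := Complex.abs_re_le_norm _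
      _ ≤ 2 / ‖1 - -w‖ := norm_sum_Icc_one_pow_le (hw.le.trans hx1) hw1 N
      _ ≤ 2 / sin φ := by gcongr
  have hreal : |∑ k ∈ Finset.Icc 1 N, (-x) ^ k| ≤ 2 :=
    calc _ ≤ 2 / ‖1 - -x‖ :=
          norm_sum_Icc_one_pow_le (by rwa [norm_neg, Real.norm_of_nonneg hx0]) (by linarith) N
      _ ≤ 2 := by
          rw [sub_neg_eq_add, Real.norm_of_nonneg (by linarith)]
          exact div_le_self zero_le_two (by linarith)
  rw [cosDefectSum_eq]
  exact (abs_sub _ _).trans (add_le_add hcomplex hreal)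

lemma tendsto_cosDefectSum {x : ℝ} (hx : |x| < 1) (φ : ℝ) :
    Tendsto (cosDefectSum x φ) atTop (nhds (cosDefect x φ)) := by
  set w := x * Complex.exp (φ * Complex.I)
  have hw : ‖-w‖ < 1 := by
    rwa [norm_neg, norm_mul, Complex.norm_exp_ofReal_mul_I, mul_one, Complex.norm_real]
  have hx' : ‖-x‖ < 1 := by rwa [norm_neg]
  have h := ((Complex.continuous_re.tendsto _).comp (tendsto_sum_Icc_one_pow hw)).sub
    (tendsto_sum_Icc_one_pow hx')
  have hlim : cosDefect x φ = (-w / (1 - -w)).re - -x / (1 - -x) := by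
    rw [cosDefect, sub_neg_eq_add, neg_div_one_add_ofReal_mul_exp_re]
    ring
  rw [hlim]
  exact h.congr fun N => (cosDefectSum_eq x φ N).symm

lemma cosDefect_pos {x φ : ℝ} (hx0 : 0 < x) (hx1 : x < 1) (hφ : cos φ < 1) :
    0 < cosDefect x φ := by
  have hD : 0 < 1 + 2 * x * cos φ + x ^ 2 := by
    nlinarith [mul_nonneg hx0.le (by linarith [neg_one_le_cos φ] : 0 ≤ 1 + cos φ)]
  rw [cosDefect, sub_pos, div_lt_div_iff₀ hD (by linarith)]
  nlinarith [mul_pos (mul_pos hx0 (sub_pos.2 hφ)) (sub_pos.2 hx1)]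

lemma continuousOn_cosDefect {φ : ℝ} (hφ : sin φ ≠ 0) :
    ContinuousOn (cosDefect · φ) (Set.Ici 0) := by
  refine ContinuousOn.sub ?_ (Continuous.continuousOn ?_)
  · exact continuousOn_id.div (by fun_prop) fun x hx => by linarith [Set.mem_Ici.1 hx]
  · refine Continuous.div (by fun_prop) (by fun_prop) fun x => ?_
    have hsin_sq : 0 < sin φ ^ 2 := by positivity
    exact (hsin_sq.trans_le (sin_sq_le_one_add_two_mul_cos_add_sq x φ)).ne'

lemma sum_mul_pow_div_add_two_eq_integral (s : Finset ℕ) (a : ℕ → ℝ) (r : ℝ) :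
    ∑ k ∈ s, a k * r ^ k / (k + 2) = ∫ t in (0 : ℝ)..1, t * ∑ k ∈ s, a k * (r * t) ^ k := by
  simp_rw [Finset.mul_sum]
  rw [intervalIntegral.integral_finsetSum fun k _ =>
    (by fun_prop : Continuous _).intervalIntegrable 0 1]
  refine Finset.sum_congr rfl fun k _ => ?_
  have h (t : ℝ) : t * (a k * (r * t) ^ k) = a k * r ^ k * t ^ (k + 1) := by ring
  simp_rw [h]
  rw [intervalIntegral.integral_const_mul, integral_pow]
  push_cast
  ring

lemma tendsto_integral_mul_cosDefectSum {r φ : ℝ} (hr0 : 0 ≤ r) (hr1 : r ≤ 1)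
    (hφ : 0 < sin φ) :
    Tendsto (fun N => ∫ t in (0 : ℝ)..1, t * cosDefectSum (r * t) φ N) atTop
      (nhds (∫ t in (0 : ℝ)..1, t * cosDefect (r * t) φ)) := by
  refine intervalIntegral.tendsto_integral_filter_of_dominated_convergence (fun _ => 2 / sin φ + 2)
    (Eventually.of_forall fun N => ?_) (Eventually.of_forall fun N => ?_)
    intervalIntegrable_const ?_
  · unfold cosDefectSum
    exact (by fun_prop : Continuous _).aestronglyMeasurable
  · refine MeasureTheory.ae_of_all _ fun t ht => ?_
    rw [Set.uIoc_of_le zero_le_one] at ht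
    rw [norm_mul, Real.norm_of_nonneg ht.1.le, Real.norm_eq_abs]
    have hbound := abs_cosDefectSum_le (mul_nonneg hr0 ht.1.le)
      (mul_le_one₀ hr1 ht.1.le ht.2) hφ N
    exact (mul_le_of_le_one_left (abs_nonneg _) ht.2).trans hbound
  · filter_upwards [MeasureTheory.volume.ae_ne 1] with t ht1 ht
    rw [Set.uIoc_of_le zero_le_one] at ht
    have hrt : |r * t| < 1 := by
      rw [abs_of_nonneg (mul_nonneg hr0 ht.1.le)]
      exact mul_lt_one_of_nonneg_of_lt_one_right hr1 ht.1.le (lt_of_le_of_ne ht.2 ht1)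
    exact (tendsto_cosDefectSum hrt φ).const_mul t

lemma integral_mul_cosDefect_pos {r φ : ℝ} (hr0 : 0 < r) (hr1 : r ≤ 1) (hφ0 : 0 < φ)
    (hφπ : φ < π) :
    0 < ∫ t in (0 : ℝ)..1, t * cosDefect (r * t) φ := by
  have hcos : cos φ < 1 := by
    simpa using cos_lt_cos_of_nonneg_of_le_pi le_rfl hφπ.le hφ0
  refine intervalIntegral.intervalIntegral_pos_of_pos_on ?_ (fun t ht => ?_) zero_lt_one
  · have hcont := continuousOn_cosDefect (sin_pos_of_pos_of_lt_pi hφ0 hφπ).ne'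
    refine (continuousOn_id.mul (hcont.comp (by fun_prop) fun t ht => ?_)).intervalIntegrable
    rw [Set.uIcc_of_le zero_le_one] at ht
    exact mul_nonneg hr0.le ht.1
  · exact mul_pos ht.1 (cosDefect_pos (mul_pos hr0 ht.1)
      (mul_lt_one_of_nonneg_of_lt_one_right hr1 ht.1.le ht.2) hcos)

theorem stmt_0 (r φ : ℝ) (hr0 : 0 < r) (hr1 : r ≤ 1) (hφ0 : 0 < φ) (hφπ : φ < π)
    (A B : ℝ)
    (hA : Tendsto (fun N : ℕ => ∑ k ∈ Finset.Icc 1 N,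
        (-1 : ℝ) ^ (k + 1) * r ^ k * Real.cos ((k : ℝ) * φ) / ((k : ℝ) + 2)) atTop (nhds A))
    (hB : Tendsto (fun N : ℕ => ∑ k ∈ Finset.Icc 1 N,
        (-1 : ℝ) ^ (k + 1) * r ^ k / ((k : ℝ) + 2)) atTop (nhds B)) :
    A < B := by
  have hpartial (N : ℕ) :
      ∑ k ∈ Finset.Icc 1 N, (-1 : ℝ) ^ (k + 1) * r ^ k / ((k : ℝ) + 2)
        - ∑ k ∈ Finset.Icc 1 N, (-1 : ℝ) ^ (k + 1) * r ^ k * Real.cos ((k : ℝ) * φ) / ((k : ℝ) + 2)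
        = ∫ t in (0 : ℝ)..1, t * cosDefectSum (r * t) φ N := by
    unfold cosDefectSum
    rw [← sum_mul_pow_div_add_two_eq_integral _ fun k => (-1) ^ (k + 1) * (1 - cos (k * φ)),
      ← Finset.sum_sub_distrib]
    refine Finset.sum_congr rfl fun k _ => ?_
    ring
  have hBA : B - A = ∫ t in (0 : ℝ)..1, t * cosDefect (r * t) φ :=
    tendsto_nhds_unique ((hB.sub hA).congr hpartial)
      (tendsto_integral_mul_cosDefectSum hr0.le hr1 (sin_pos_of_pos_of_lt_pi hφ0 hφπ))
  linarith [integral_mul_cosDefect_pos hr0 hr1 hφ0 hφπ]
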